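/- arXiv:2304.02474 — 3 statements merged into one kernel-verified Lean document; each statement's English description precedes it below -/
import Mathlib

section
/- ∑_{k=1}^∞ ζ(2k)/(k(k+1)) = −1/2 + ln(2π). -/
open Real Complex
open Filter Nat


lemma log_ge_aux {x : ℝ} (hx : 0 ≤ x) : x - x^2/2 ≤ Real.log (1+x) := by
  have h : ∀ y ∈ Set.Ici (0:ℝ), 0 ≤ Real.log (1+y) - y + y^2/2 := by
    intro y hy
    have key : MonotoneOn (fun y : ℝ => Real.log (1+y) - y + y^2/2) (Set.Ici 0) := by
      apply monotoneOn_of_deriv_nonneg (convex_Ici 0)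
      · apply ContinuousOn.add (ContinuousOn.sub ?_ continuousOn_id) (by fun_prop)
        exact (continuousOn_const.add continuousOn_id).log (fun y hy => by
          simp only [Set.mem_Ici] at hy; simp only [Pi.add_apply, id]; positivity)
      · apply DifferentiableOn.add (DifferentiableOn.sub ?_ differentiableOn_id) (by fun_prop)
        apply DifferentiableOn.log (by fun_prop)
        intro y hy
        simp [interior_Ici] at hy; nlinarith
      · intro y hy
        simp only [interior_Ici, Set.mem_Ioi] at hy
        have h1 : (1:ℝ) + y ≠ 0 := by nlinarith
        have hd : HasDerivAt (fun y : ℝ => Real.log (1+y) - y + y^2/2)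
            (1/(1+y) - 1 + y) y := by
          have := ((hasDerivAt_id y).const_add 1).log h1
          exact ((this.sub (hasDerivAt_id y)).add
            ((hasDerivAt_pow 2 y).div_const 2)).congr_deriv (by simp)
        rw [hd.deriv]
        have : 1/(1+y) - 1 + y = y^2/(1+y) := by field_simp; ring
        rw [this]; positivity
    have := key (Set.self_mem_Ici) hy hy
    simpa using this
  have := h x hx
  linarith

lemma log_le_aux {x : ℝ} (hx : 0 ≤ x) : Real.log (1+x) ≤ x - x^2/2 + x^3/3 := by
  have h : ∀ y ∈ Set.Ici (0:ℝ), 0 ≤ y - y^2/2 + y^3/3 - Real.log (1+y) := by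
    intro y hy
    have key : MonotoneOn (fun y : ℝ => y - y^2/2 + y^3/3 - Real.log (1+y)) (Set.Ici 0) := by
      apply monotoneOn_of_deriv_nonneg (convex_Ici 0)
      · apply ContinuousOn.sub (by fun_prop)
        exact (continuousOn_const.add continuousOn_id).log (fun y hy => by
          simp only [Set.mem_Ici] at hy; simp only [Pi.add_apply, id]; positivity)
      · apply DifferentiableOn.sub (by fun_prop)
        apply DifferentiableOn.log (by fun_prop)
        intro y hy
        simp [interior_Ici] at hy; nlinarith
      · intro y hy
        simp only [interior_Ici, Set.mem_Ioi] at hy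
        have h1 : (1:ℝ) + y ≠ 0 := by nlinarith
        have hd : HasDerivAt (fun y : ℝ => y - y^2/2 + y^3/3 - Real.log (1+y))
            (1 - y + y^2 - 1/(1+y)) y := by
          have hl := ((hasDerivAt_id y).const_add 1).log h1
          have h2 := (hasDerivAt_pow 2 y).div_const 2
          have h3 := (hasDerivAt_pow 3 y).div_const 3
          have := (((hasDerivAt_id y).sub h2).add h3).sub hl
          convert this using 1
          · rfl
          · rfl
          · rfl
          simp
        rw [hd.deriv]
        have : 1 - y + y^2 - 1/(1+y) = y^3/(1+y) := by field_simp; ring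
        rw [this]; positivity
    have := key (Set.self_mem_Ici) hy hy
    simpa using this
  have := h x hx
  linarith


lemma hasSum_inner {x : ℝ} (h0 : 0 < x) (h1 : x < 1) :
    HasSum (fun k : ℕ => x^(k+1) / (((k:ℝ)+1)*((k:ℝ)+2)))
      (1 + (1-x)/x * Real.log (1-x)) := by
  have hx : |x| < 1 := by rw [abs_of_pos h0]; exact h1
  have hL : HasSum (fun k : ℕ => x^(k+1)/((k:ℝ)+1)) (-Real.log (1-x)) := by
    simpa using hasSum_pow_div_log_of_abs_lt_one hx
  have hL2 : HasSum (fun k : ℕ => x^(k+2)/((k:ℝ)+2)) (-Real.log (1-x) - x) := by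
    have h' := (hasSum_nat_add_iff' (f := fun k : ℕ => x^(k+1)/((k:ℝ)+1))
      (g := -Real.log (1-x)) 1).mpr hL
    have he : -Real.log (1-x) - ∑ i ∈ Finset.range 1, x^(i+1)/((i:ℝ)+1)
        = -Real.log (1-x) - x := by simp
    rw [he] at h'
    convert h' using 2 with k
    · rfl
    push_cast; ring_nf
  have hL3 : HasSum (fun k : ℕ => x^(k+1)/((k:ℝ)+2)) ((-Real.log (1-x) - x)/x) := by
    have := hL2.div_const x
    convert this using 2 with k
    · rfl
    rw [pow_succ]
    field_simp
    ring
  have hs := hL.sub hL3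
  have hval : -Real.log (1-x) - (-Real.log (1-x) - x)/x
      = 1 + (1-x)/x * Real.log (1-x) := by
    field_simp
    ring
  rw [hval] at hs
  convert hs using 2 with k
  · rfl
  have hk1 : ((k:ℝ)+1) ≠ 0 := by positivity
  have hk2 : ((k:ℝ)+2) ≠ 0 := by positivity
  field_simp
  ring

lemma hasSum_one : HasSum (fun k : ℕ => 1 / (((k:ℝ)+1)*((k:ℝ)+2))) 1 := by
  have hnn : ∀ k : ℕ, 0 ≤ 1 / (((k:ℝ)+1)*((k:ℝ)+2)) := fun k => by positivity
  rw [hasSum_iff_tendsto_nat_of_nonneg hnn]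
  have key : ∀ n : ℕ, ∑ i ∈ Finset.range n, 1 / (((i:ℝ)+1)*((i:ℝ)+2))
      = 1 - 1/((n:ℝ)+1) := by
    intro n
    induction n with
    | zero => simp
    | succ m ih =>
      rw [Finset.sum_range_succ, ih]
      have h1 : ((m:ℝ)+1) ≠ 0 := by positivity
      have h2 : ((m:ℝ)+2) ≠ 0 := by positivity
      push_cast
      field_simp
      ring
  simp only [key]
  have := tendsto_one_div_add_atTop_nhds_zero_nat (𝕜 := ℝ)
  have h2 : Tendsto (fun n : ℕ => 1 - 1/((n:ℝ)+1)) atTop (nhds (1 - 0)) :=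
    tendsto_const_nhds.sub (by simpa using this)
  simpa using h2


noncomputable def gfun (n : ℕ) : ℝ :=
  1 + (((n:ℝ)+1)^2 - 1) * Real.log (1 - 1/((n:ℝ)+1)^2)

noncomputable def Pfun (N : ℕ) : ℝ :=
  N + 2 * Real.log (N !) - ((N:ℝ)^2 + 2*N) * Real.log N
    + ((N:ℝ)^2 - 1) * Real.log ((N:ℝ)+1)

lemma sum_gfun (N : ℕ) : ∑ i ∈ Finset.range N, gfun i = Pfun N := by
  induction N with
  | zero => simp [Pfun]
  | succ N ih =>
    rw [Finset.sum_range_succ, ih]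
    rcases Nat.eq_zero_or_pos N with h | h
    · subst h
      simp [Pfun, gfun]
    · have hn : (1:ℝ) ≤ (N:ℝ) := by exact_mod_cast h
      have h0 : (N:ℝ) ≠ 0 := by positivity
      have h1 : (N:ℝ)+1 ≠ 0 := by positivity
      have h2 : (N:ℝ)+2 ≠ 0 := by positivity
      have hfac : Real.log ((N+1)!) = Real.log (N !) + Real.log ((N:ℝ)+1) := by
        rw [Nat.factorial_succ]
        push_cast
        rw [Real.log_mul h1 (by exact_mod_cast Nat.cast_ne_zero.mpr N.factorial_ne_zero)]
        ring
      have hlog : Real.log (1 - 1/((N:ℝ)+1)^2)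
          = Real.log N + Real.log ((N:ℝ)+2) - 2 * Real.log ((N:ℝ)+1) := by
        have he : (1:ℝ) - 1/((N:ℝ)+1)^2 = (N:ℝ)*((N:ℝ)+2)/((N:ℝ)+1)^2 := by
          field_simp; ring
        rw [he, Real.log_div (by positivity) (by positivity),
          Real.log_mul h0 h2, Real.log_pow]
        push_cast; ring
      simp only [Pfun, gfun, hfac, hlog]
      push_cast
      ring

lemma gfun_nonneg (n : ℕ) : 0 ≤ gfun n := by
  rcases Nat.eq_zero_or_pos n with h | h
  · subst h; simp [gfun]
  · have hn : (1:ℝ) ≤ (n:ℝ) := by exact_mod_cast h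
    have hm : (2:ℝ) ≤ (n:ℝ)+1 := by linarith
    have hx : (0:ℝ) < 1 - 1/((n:ℝ)+1)^2 := by
      have : (1:ℝ)/((n:ℝ)+1)^2 ≤ 1/4 := by
        apply div_le_div_of_nonneg_left (by norm_num) (by norm_num)
        nlinarith
      linarith
    have hlb : 1 - (1 - 1/((n:ℝ)+1)^2)⁻¹ ≤ Real.log (1 - 1/((n:ℝ)+1)^2) :=
      Real.one_sub_inv_le_log_of_pos hx
    have hkey : 1 - (1 - 1/((n:ℝ)+1)^2)⁻¹ = -1/(((n:ℝ)+1)^2 - 1) := by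
      have h1 : ((n:ℝ)+1)^2 ≠ 0 := by positivity
      have h2 : ((n:ℝ)+1)^2 - 1 ≠ 0 := by nlinarith
      field_simp
      ring
    have hpos : 0 < ((n:ℝ)+1)^2 - 1 := by nlinarith
    unfold gfun
    have := mul_le_mul_of_nonneg_left hlb (le_of_lt hpos)
    rw [hkey] at this
    have h3 : (((n:ℝ)+1)^2 - 1) * (-1/(((n:ℝ)+1)^2 - 1)) = -1 := by
      field_simp
    nlinarith [this]


lemma tendsto_aN :
    Tendsto (fun N : ℕ => ((N:ℝ)^2 - 1) * Real.log (1 + 1/(N:ℝ)) - N)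
      atTop (nhds (-1/2)) := by
  have h0 : Tendsto (fun n : ℕ => 1/(n : ℝ)) atTop (nhds 0) :=
    tendsto_one_div_atTop_nhds_zero_nat
  have hlo : Tendsto (fun N : ℕ => -1/2 - 1/(N:ℝ)) atTop (nhds (-1/2)) := by
    have := (tendsto_const_nhds : Tendsto (fun _ : ℕ => (-1/2 : ℝ)) atTop (nhds (-1/2))).sub h0
    simpa using this
  have hhi : Tendsto (fun N : ℕ => -1/2 + 1/(N:ℝ)) atTop (nhds (-1/2)) := by
    have := (tendsto_const_nhds : Tendsto (fun _ : ℕ => (-1/2 : ℝ)) atTop (nhds (-1/2))).add h0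
    simpa using this
  apply tendsto_of_tendsto_of_tendsto_of_le_of_le' hlo hhi
  · filter_upwards [eventually_ge_atTop 1] with N hN
    have hn : (1:ℝ) ≤ (N:ℝ) := by exact_mod_cast hN
    have hnpos : (0:ℝ) < N := by linarith
    have ha0 : (0:ℝ) ≤ 1/(N:ℝ) := by positivity
    have ha1 : 1/(N:ℝ) ≤ 1 := by
      rw [div_le_one hnpos]; linarith
    set a := 1/(N:ℝ) with hadef
    have hfac : (0:ℝ) ≤ (N:ℝ)^2 - 1 := by nlinarith
    have hlog := log_ge_aux ha0
    have hmul := mul_le_mul_of_nonneg_left hlog hfac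
    have hna : (N:ℝ) = 1/a := by
      rw [hadef]; field_simp
    have hexp : ((N:ℝ)^2 - 1) * (a - a^2/2) - N = -1/2 - a + a^2/2 := by
      rw [hna]
      have hane : a ≠ 0 := by rw [hadef]; positivity
      field_simp
      ring
    have : -1/2 - a + a^2/2 ≤ ((N:ℝ)^2-1) * Real.log (1+a) - N := by
      rw [← hexp]; linarith
    nlinarith [this]
  · filter_upwards [eventually_ge_atTop 1] with N hN
    have hn : (1:ℝ) ≤ (N:ℝ) := by exact_mod_cast hN
    have hnpos : (0:ℝ) < N := by linarith
    have ha0 : (0:ℝ) ≤ 1/(N:ℝ) := by positivity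
    have ha1 : 1/(N:ℝ) ≤ 1 := by
      rw [div_le_one hnpos]; linarith
    set a := 1/(N:ℝ) with hadef
    have hfac : (0:ℝ) ≤ (N:ℝ)^2 - 1 := by nlinarith
    have hlog := log_le_aux ha0
    have hmul := mul_le_mul_of_nonneg_left hlog hfac
    have hna : (N:ℝ) = 1/a := by
      rw [hadef]; field_simp
    have hexp : ((N:ℝ)^2 - 1) * (a - a^2/2 + a^3/3) - N
        = -1/2 - 2*a/3 + a^2/2 - a^3/3 := by
      rw [hna]
      have hane : a ≠ 0 := by rw [hadef]; positivity
      field_simp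
      ring
    have h2 : ((N:ℝ)^2-1) * Real.log (1+a) - N ≤ -1/2 - 2*a/3 + a^2/2 - a^3/3 := by
      rw [← hexp]; linarith
    nlinarith [h2]

lemma Pfun_eq {N : ℕ} (hN : 1 ≤ N) :
    Pfun N = 2 * Real.log (Stirling.stirlingSeq N) + Real.log 2
      + (((N:ℝ)^2 - 1) * Real.log (1 + 1/(N:ℝ)) - N) := by
  have hn : (1:ℝ) ≤ (N:ℝ) := by exact_mod_cast hN
  have hnpos : (0:ℝ) < N := by linarith
  have hsf := Stirling.log_stirlingSeq_formula N
  have h2n : Real.log (2*(N:ℝ)) = Real.log 2 + Real.log N :=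
    Real.log_mul (by norm_num) (by positivity)
  have hne : Real.log ((N:ℝ)/Real.exp 1) = Real.log N - 1 := by
    rw [Real.log_div (by positivity) (Real.exp_ne_zero 1), Real.log_exp]
  have hN1 : Real.log ((N:ℝ)+1) = Real.log N + Real.log (1 + 1/(N:ℝ)) := by
    rw [← Real.log_mul (by positivity) (by positivity)]
    congr 1
    field_simp
  have hlogfac : Real.log (N !) = Real.log (Stirling.stirlingSeq N)
      + 1/2 * (Real.log 2 + Real.log N) + (N:ℝ) * (Real.log N - 1) := by
    rw [hsf, h2n, hne]; ring
  rw [Pfun, hlogfac, hN1]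
  ring

lemma tendsto_Pfun :
    Tendsto Pfun atTop (nhds (-1/2 + Real.log (2*Real.pi))) := by
  have hsp : (0:ℝ) < Real.sqrt Real.pi := Real.sqrt_pos.mpr Real.pi_pos
  have h1 : Tendsto (fun N : ℕ => Real.log (Stirling.stirlingSeq N)) atTop
      (nhds (Real.log (Real.sqrt Real.pi))) :=
    ((Real.continuousAt_log (ne_of_gt hsp)).tendsto).comp
      Stirling.tendsto_stirlingSeq_sqrt_pi
  have h2 : Tendsto (fun N : ℕ => 2 * Real.log (Stirling.stirlingSeq N) + Real.log 2
      + (((N:ℝ)^2 - 1) * Real.log (1 + 1/(N:ℝ)) - N)) atTop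
      (nhds (2 * Real.log (Real.sqrt Real.pi) + Real.log 2 + (-1/2))) :=
    ((h1.const_mul 2).add_const _).add tendsto_aN
  have hval : 2 * Real.log (Real.sqrt Real.pi) + Real.log 2 + (-1/2)
      = -1/2 + Real.log (2*Real.pi) := by
    rw [Real.log_sqrt Real.pi_pos.le, Real.log_mul (by norm_num) (ne_of_gt Real.pi_pos)]
    ring
  rw [← hval]
  apply h2.congr'
  filter_upwards [eventually_ge_atTop 1] with N hN
  exact (Pfun_eq hN).symm


noncomputable def Ffun (k n : ℕ) : ℝ :=
  (1/((n:ℝ)+1)^2)^(k+1) / (((k:ℝ)+1)*((k:ℝ)+2))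

lemma Ffun_nonneg (k n : ℕ) : 0 ≤ Ffun k n := by unfold Ffun; positivity

lemma base_summable : Summable (fun n : ℕ => 1/((n:ℝ)+1)^2) := by
  have := (summable_nat_add_iff (f := fun n : ℕ => 1/(n:ℝ)^2) 1).mpr
    (summable_one_div_nat_pow.mpr (by norm_num))
  exact this.congr (fun n => by push_cast; ring)

lemma Ffun_le (k n : ℕ) : Ffun k n ≤ 1/(((k:ℝ)+1)*((k:ℝ)+2)) * (1/((n:ℝ)+1)^2) := by
  unfold Ffun
  rw [div_eq_mul_one_div ((1/((n:ℝ)+1)^2)^(k+1)), mul_comm]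
  apply mul_le_mul_of_nonneg_left _ (by positivity)
  calc (1/((n:ℝ)+1)^2)^(k+1) ≤ (1/((n:ℝ)+1)^2)^1 := by
        apply pow_le_pow_of_le_one (by positivity) _ (by omega)
        rw [div_le_one (by positivity)]
        nlinarith [Nat.cast_nonneg (α := ℝ) n]
    _ = 1/((n:ℝ)+1)^2 := pow_one _

lemma summable_row (k : ℕ) : Summable (fun n => Ffun k n) :=
  Summable.of_nonneg_of_le (Ffun_nonneg k) (Ffun_le k)
    ((base_summable.mul_left _))

lemma summable_Ffun : Summable (Function.uncurry Ffun) := by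
  rw [show Function.uncurry Ffun = fun p : ℕ × ℕ => Ffun p.1 p.2 from rfl,
    summable_prod_of_nonneg (fun p => Ffun_nonneg p.1 p.2)]
  refine ⟨fun k => summable_row k, ?_⟩
  set C : ℝ := ∑' n : ℕ, 1/((n:ℝ)+1)^2 with hC
  refine Summable.of_nonneg_of_le (f := fun k : ℕ => 1/(((k:ℝ)+1)*((k:ℝ)+2)) * C)
    (fun k => tsum_nonneg (fun n => Ffun_nonneg k n))
    (fun k => ?_) ?_
  swap
  · apply Summable.mul_right
    have : Summable (fun k : ℕ => 1/((k:ℝ)+1)^2) := base_summable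
    apply Summable.of_nonneg_of_le (fun k => by positivity) (fun k => ?_) this
    apply div_le_div_of_nonneg_left (by norm_num) (by positivity)
    nlinarith [Nat.cast_nonneg (α := ℝ) k]
  · calc ∑' n, Ffun k n ≤ ∑' n : ℕ, 1/(((k:ℝ)+1)*((k:ℝ)+2)) * (1/((n:ℝ)+1)^2) :=
        Summable.tsum_le_tsum (Ffun_le k) (summable_row k) (base_summable.mul_left _)
    _ = 1/(((k:ℝ)+1)*((k:ℝ)+2)) * C := tsum_mul_left


lemma hasSum_col (n : ℕ) : HasSum (fun k => Ffun k n) (gfun n) := by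
  rcases Nat.eq_zero_or_pos n with h | h
  · subst h
    have h1 : gfun 0 = 1 := by simp [gfun]
    rw [h1]
    have : (fun k : ℕ => Ffun k 0) = fun k : ℕ => 1 / (((k:ℝ)+1)*((k:ℝ)+2)) := by
      funext k
      simp [Ffun]
    rw [this]
    exact hasSum_one
  · have hn : (1:ℝ) ≤ (n:ℝ) := by exact_mod_cast h
    set x : ℝ := 1/((n:ℝ)+1)^2 with hx
    have hx0 : 0 < x := by rw [hx]; positivity
    have hx1 : x < 1 := by
      rw [hx, div_lt_one (by positivity)]
      nlinarith
    have hs := hasSum_inner hx0 hx1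
    have hval : 1 + (1-x)/x * Real.log (1-x) = gfun n := by
      have hxe : (1-x)/x = ((n:ℝ)+1)^2 - 1 := by
        rw [hx]
        field_simp
      rw [hxe, gfun, hx]
    rw [hval] at hs
    exact hs

lemma hasSum_gfun : HasSum gfun (-1/2 + Real.log (2*Real.pi)) := by
  rw [hasSum_iff_tendsto_nat_of_nonneg gfun_nonneg]
  simpa only [sum_gfun] using tendsto_Pfun

lemma real_result : ∑' k : ℕ, ∑' n : ℕ, Ffun k n = -1/2 + Real.log (2*Real.pi) := by
  rw [← Summable.tsum_comm summable_Ffun]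
  calc ∑' n : ℕ, ∑' k : ℕ, Ffun k n = ∑' n, gfun n := by
        congr 1
        funext n
        exact (hasSum_col n).tsum_eq
    _ = -1/2 + Real.log (2*Real.pi) := hasSum_gfun.tsum_eq

lemma zeta_term (k : ℕ) :
    riemannZeta (2 * ((k : ℂ) + 1)) / (((k : ℂ) + 1) * ((k : ℂ) + 2))
      = ((∑' n : ℕ, Ffun k n : ℝ) : ℂ) := by
  have hre : 1 < (2 * ((k : ℂ) + 1)).re := by
    have : (2 * ((k : ℂ) + 1)).re = 2*(k:ℝ)+2 := by
      simp
      ring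
    rw [this]
    nlinarith [Nat.cast_nonneg (α := ℝ) k]
  rw [zeta_eq_tsum_one_div_nat_add_one_cpow hre]
  have hterm : ∀ n : ℕ, (1 : ℂ) / ((n : ℂ) + 1) ^ (2 * ((k : ℂ) + 1))
      = ((1/((n:ℝ)+1)^(2*k+2) : ℝ) : ℂ) := by
    intro n
    have hcast : (2 * ((k : ℂ) + 1)) = ((2*k+2 : ℕ) : ℂ) := by push_cast; ring
    rw [hcast, Complex.cpow_natCast]
    push_cast
    rfl
  rw [tsum_congr hterm]
  have hFn : ∀ n : ℕ, Ffun k n = (1/((n:ℝ)+1)^(2*k+2)) / (((k:ℝ)+1)*((k:ℝ)+2)) := by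
    intro n
    rw [Ffun]
    congr 1
    rw [div_pow, one_pow, ← pow_mul]
    congr 2
    try ring
    try omega
  rw [← Complex.ofReal_tsum]
  rw [show (∑' n : ℕ, Ffun k n : ℝ) = (∑' n : ℕ, 1/((n:ℝ)+1)^(2*k+2)) / (((k:ℝ)+1)*((k:ℝ)+2)) by
    rw [tsum_congr hFn, tsum_div_const]]
  push_cast
  ring_nf

theorem stmt5 :
    ∑' k : ℕ, riemannZeta (2 * ((k : ℂ) + 1)) / (((k : ℂ) + 1) * ((k : ℂ) + 2))
      = -1 / 2 + Real.log (2 * π) := by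
  rw [tsum_congr zeta_term, ← Complex.ofReal_tsum, real_result]
  push_cast
  ring
end

section
/- ∑_{k=1}^∞ ζ(2k)/(k(2k+1)) = −1 + ln(2π). -/
open Real Complex Filter Topology Finset

namespace Stmt6Aux

open scoped Nat

noncomputable def a (p : ℕ × ℕ) : ℝ :=
  (1 / ((p.2 : ℝ) + 1)) ^ (2 * p.1 + 2) / (((p.1 : ℝ) + 1) * (2 * (p.1 : ℝ) + 3))

lemma a_nonneg (p : ℕ × ℕ) : 0 ≤ a p := by
  unfold a
  positivity

set_option maxHeartbeats 1000000 in
lemma summable_sq : Summable (fun n : ℕ => (1 / ((n : ℝ) + 1)) ^ 2) := by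
  have h : Summable (fun n : ℕ => 1 / ((n : ℝ)) ^ 2) :=
    Real.summable_one_div_nat_pow.mpr one_lt_two
  have h2 := (summable_nat_add_iff (f := fun n : ℕ => 1 / ((n : ℝ)) ^ 2) 1).mpr h
  refine h2.congr fun n => ?_
  rw [div_pow, one_pow]
  push_cast
  ring_nf

set_option maxHeartbeats 1000000 in
lemma summable_a : Summable a := by
  have hb : Summable (fun p : ℕ × ℕ =>
      (1 / ((p.1 : ℝ) + 1)) ^ 2 * (1 / ((p.2 : ℝ) + 1)) ^ 2) :=
    Summable.mul_of_nonneg summable_sq summable_sq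
      (Pi.le_def.mpr fun n => by positivity) (Pi.le_def.mpr fun n => by positivity)
  refine Summable.of_nonneg_of_le a_nonneg (fun p => ?_) hb
  obtain ⟨k, n⟩ := p
  unfold a
  have h1 : (1 / ((n : ℝ) + 1)) ^ (2 * k + 2) ≤ (1 / ((n : ℝ) + 1)) ^ 2 := by
    apply pow_le_pow_of_le_one (by positivity) _ (by omega)
    rw [div_le_one (by positivity)]
    linarith [Nat.cast_nonneg (α := ℝ) n]
  have h2 : ((k : ℝ) + 1) ^ 2 ≤ ((k : ℝ) + 1) * (2 * (k : ℝ) + 3) := by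
    have : (0:ℝ) ≤ (k:ℝ) := Nat.cast_nonneg k
    nlinarith
  calc (1 / ((n : ℝ) + 1)) ^ (2 * k + 2) / (((k : ℝ) + 1) * (2 * (k : ℝ) + 3))
      ≤ (1 / ((n : ℝ) + 1)) ^ 2 / (((k : ℝ) + 1) * (2 * (k : ℝ) + 3)) := by
        apply div_le_div_of_nonneg_right h1 (by positivity) |>.trans_eq rfl
    _ ≤ (1 / ((n : ℝ) + 1)) ^ 2 / (((k : ℝ) + 1) ^ 2) := by
        apply div_le_div_of_nonneg_left (by positivity) (by positivity) h2
    _ = (1 / ((k : ℝ) + 1)) ^ 2 * (1 / ((n : ℝ) + 1)) ^ 2 := by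
        have hk : ((k : ℝ) + 1) ≠ 0 := by positivity
        have hn : ((n : ℝ) + 1) ≠ 0 := by positivity
        field_simp

noncomputable def h (n : ℕ) : ℝ :=
  2 + 2 * Real.log ((n : ℝ) + 1) - Real.log (n : ℝ) - Real.log ((n : ℝ) + 2)
    + ((n : ℝ) + 1) * (Real.log (n : ℝ) - Real.log ((n : ℝ) + 2))

/-- closed form for the inner sum, `0 < x < 1`. -/
lemma hasSum_inner {x : ℝ} (hx : 0 < x) (hx1 : x < 1) :
    HasSum (fun k : ℕ => x ^ (2 * k + 2) / (((k : ℝ) + 1) * (2 * (k : ℝ) + 3)))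
      (2 - Real.log (1 - x ^ 2) - (Real.log (1 + x) - Real.log (1 - x)) / x) := by
  have hxabs : |x ^ 2| < 1 := by
    rw [_root_.abs_of_nonneg (by positivity : (0:ℝ) ≤ x ^ 2)]
    nlinarith
  have hxabs' : |x| < 1 := by rwa [_root_.abs_of_pos hx]
  have A := Real.hasSum_pow_div_log_of_abs_lt_one hxabs
  have B := Real.hasSum_log_sub_log_of_abs_lt_one hxabs'
  -- shift B by one
  set f : ℕ → ℝ := fun k => (2:ℝ) * (1 / (2 * (k:ℝ) + 1)) * x ^ (2 * k + 1) with hf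
  have hsum0 : ∑ i ∈ Finset.range 1, f i = 2 * x := by
    simp [hf]
  have hB : HasSum f ((Real.log (1 + x) - Real.log (1 - x) - 2 * x)
      + ∑ i ∈ Finset.range 1, f i) := by
    rw [hsum0]
    convert B using 1
    ring
  have B' : HasSum (fun k : ℕ => f (k + 1))
      ((Real.log (1 + x) - Real.log (1 - x)) - 2 * x) := (hasSum_nat_add_iff 1).mpr hB
  have B'' := B'.div_const x
  have C := A.sub B''
  have hfun : ∀ k : ℕ, x ^ (2 * k + 2) / (((k : ℝ) + 1) * (2 * (k : ℝ) + 3))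
      = (x ^ 2) ^ (k + 1) / ((k:ℝ) + 1) - f (k + 1) / x := by
    intro k
    simp only [hf]
    have hk1 : ((k:ℝ) + 1) ≠ 0 := by positivity
    have hk3 : (2 * (k:ℝ) + 3) ≠ 0 := by positivity
    have hxpow : (x ^ 2) ^ (k + 1) = x ^ (2 * k + 2) := by
      rw [← pow_mul]; ring_nf
    have hxp : x ^ (2 * (k + 1) + 1) = x ^ (2 * k + 2) * x := by ring
    rw [hxpow, hxp]
    push_cast
    field_simp
    ring
  have hval : -Real.log (1 - x ^ 2) - ((Real.log (1 + x) - Real.log (1 - x)) - 2 * x) / x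
      = 2 - Real.log (1 - x ^ 2) - (Real.log (1 + x) - Real.log (1 - x)) / x := by
    field_simp
    ring
  rw [← hval]
  exact C.congr_fun hfun

lemma hasSum_inner_succ (n : ℕ) :
    HasSum (fun k => a (k, n + 1)) (h (n + 1)) := by
  set m : ℝ := (n : ℝ) + 2 with hm
  have hm2 : (2:ℝ) ≤ m := by rw [hm]; linarith [Nat.cast_nonneg (α := ℝ) n]
  have hmpos : (0:ℝ) < m := by linarith
  have hx : (0:ℝ) < 1 / m := by positivity
  have hx1 : 1 / m < 1 := by rw [div_lt_one hmpos]; linarith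
  have key := hasSum_inner hx hx1
  have hcast : ((n + 1 : ℕ) : ℝ) + 1 = m := by push_cast [hm]; ring
  have hterm : ∀ k : ℕ, (1/m) ^ (2 * k + 2) / (((k : ℝ) + 1) * (2 * (k : ℝ) + 3))
      = a (k, n + 1) := by
    intro k
    unfold a
    rw [hcast]
  have hn1 : (0:ℝ) < m - 1 := by linarith
  have e1 : 1 - (1/m) ^ 2 = ((m - 1) * (m + 1)) / m ^ 2 := by
    field_simp; ring
  have e2 : 1 + 1/m = (m + 1) / m := by field_simp
  have e3 : 1 - 1/m = (m - 1) / m := by field_simp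
  have hval : 2 - Real.log (1 - (1/m) ^ 2)
        - (Real.log (1 + 1/m) - Real.log (1 - 1/m)) / (1/m) = h (n + 1) := by
    rw [e1, e2, e3, Real.log_div (by positivity) (by positivity),
      Real.log_mul (by positivity) (by positivity),
      Real.log_div (by positivity) (by positivity),
      Real.log_div (by positivity) (by positivity), Real.log_pow, one_div m, div_inv_eq_mul]
    unfold h
    have h1 : ((n + 1 : ℕ) : ℝ) = m - 1 := by rw [hm]; push_cast; ring
    have h2 : ((n + 1 : ℕ) : ℝ) + 1 = m := hcast
    have h3 : ((n + 1 : ℕ) : ℝ) + 2 = m + 1 := by rw [hm]; push_cast; ring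
    rw [h1]
    push_cast
    ring_nf
  rw [← hval]
  exact key.congr_fun fun k => (hterm k).symm

lemma summable_a0 : Summable (fun k : ℕ => a (k, 0)) := by
  refine Summable.of_nonneg_of_le (fun k => a_nonneg _) (fun k => ?_) summable_sq
  unfold a
  simp only [Nat.cast_zero, zero_add, div_one, one_pow]
  rw [one_div, ← one_div]
  have h2 : ((k : ℝ) + 1) ^ 2 ≤ ((k : ℝ) + 1) * (2 * (k : ℝ) + 3) := by
    have : (0:ℝ) ≤ (k:ℝ) := Nat.cast_nonneg k
    nlinarith
  calc (1:ℝ) / (((k : ℝ) + 1) * (2 * (k : ℝ) + 3)) ≤ 1 / ((k : ℝ) + 1) ^ 2 := by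
        apply div_le_div_of_nonneg_left (by norm_num) (by positivity) h2
    _ = (1 / ((k : ℝ) + 1)) ^ 2 := by rw [div_pow]; norm_num

lemma partial0 (N : ℕ) : ∑ k ∈ range N, a (k, 0)
    = 2 + 2 * (harmonic N : ℝ) - 2 * (harmonic (2 * N + 1) : ℝ) := by
  induction N with
  | zero => simp [harmonic_succ]
  | succ N ih =>
    rw [Finset.sum_range_succ, ih]
    have h1 : 2 * (N + 1) + 1 = (2 * N + 1) + 1 + 1 := by ring
    rw [h1, harmonic_succ (2 * N + 1 + 1), harmonic_succ (2 * N + 1), harmonic_succ N]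
    unfold a
    push_cast
    have hk1 : ((N:ℝ) + 1) ≠ 0 := by positivity
    have hk3 : (2 * (N:ℝ) + 3) ≠ 0 := by positivity
    field_simp
    ring

lemma tendsto_2N1 : Tendsto (fun N : ℕ => 2 * N + 1) atTop atTop :=
  tendsto_atTop_atTop_of_monotone (fun a b hab => by omega) (fun b => ⟨b, by omega⟩)

lemma hasSum_inner_zero : HasSum (fun k => a (k, 0)) (h 0) := by
  have hh0 : h 0 = 2 - 2 * Real.log 2 := by
    unfold h
    simp [Real.log_zero, Real.log_one]
    ring
  rw [hh0, hasSum_iff_tendsto_nat_of_nonneg (fun k => a_nonneg _)]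
  rw [funext partial0]
  have t1 := Real.tendsto_harmonic_sub_log
  have t2 : Tendsto (fun N : ℕ => (harmonic (2 * N + 1) : ℝ) - Real.log (2 * N + 1))
      atTop (𝓝 Real.eulerMascheroniConstant) := by
    have := t1.comp tendsto_2N1
    refine this.congr fun N => ?_
    simp only [Function.comp_apply]
    push_cast
    ring_nf
  have t3 : Tendsto (fun N : ℕ => Real.log ((2 * N + 1 : ℝ)) - Real.log N) atTop
      (𝓝 (Real.log 2)) := by
    have base : Tendsto (fun N : ℕ => Real.log (2 + 1 / (N : ℝ))) atTop (𝓝 (Real.log 2)) := by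
      have : Tendsto (fun N : ℕ => 2 + 1 / (N : ℝ)) atTop (𝓝 2) := by
        simpa using (tendsto_const_nhds (x := (2:ℝ))).add tendsto_one_div_atTop_nhds_zero_nat
      exact (Real.continuousAt_log (by norm_num)).tendsto.comp this
    refine base.congr' ?_
    filter_upwards [eventually_ge_atTop 1] with N hN
    have hN0 : (0:ℝ) < N := by exact_mod_cast hN
    rw [← Real.log_div (by positivity) hN0.ne']
    congr 1
    field_simp
  have comb := ((t1.sub t2).sub t3).const_mul (2:ℝ)
  have comb2 := comb.const_add (2:ℝ)
  have : (2:ℝ) + 2 * ((Real.eulerMascheroniConstant - Real.eulerMascheroniConstant)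
      - Real.log 2) = 2 - 2 * Real.log 2 := by ring
  rw [this] at comb2
  refine comb2.congr fun N => ?_
  ring

lemma hasSum_column (n : ℕ) : HasSum (fun k => a (k, n)) (h n) := by
  cases n with
  | zero => exact hasSum_inner_zero
  | succ n => exact hasSum_inner_succ n

lemma sum_h (N : ℕ) : ∑ n ∈ range N, h n
    = 2 * N + 2 * Real.log (N !) - N * Real.log N - (N + 1) * Real.log ((N : ℝ) + 1) := by
  induction N with
  | zero => simp
  | succ N ih =>
    rw [Finset.sum_range_succ, ih]
    have hfact : ((N + 1)! : ℝ) = ((N : ℝ) + 1) * (N ! : ℝ) := by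
      rw [Nat.factorial_succ]; push_cast; ring
    rw [hfact, Real.log_mul (by positivity) (by positivity)]
    unfold h
    push_cast
    ring_nf

lemma log_factorial (N : ℕ) (hN : 1 ≤ N) :
    Real.log (N !) = Real.log (Stirling.stirlingSeq N)
      + 1 / 2 * Real.log (2 * N) + N * Real.log N - N := by
  have hf := Stirling.log_stirlingSeq_formula N
  have hN0 : (0:ℝ) < N := by exact_mod_cast hN
  have hlogdiv : Real.log ((N : ℝ) / Real.exp 1) = Real.log N - 1 := by
    rw [Real.log_div hN0.ne' (Real.exp_ne_zero 1), Real.log_exp]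
  rw [hlogdiv] at hf
  have := hf
  linarith [this]

lemma tendsto_main : Tendsto
    (fun N : ℕ => 2 * (N:ℝ) + 2 * Real.log (N !) - N * Real.log N
      - (N + 1) * Real.log ((N : ℝ) + 1))
    atTop (𝓝 (Real.log (2 * π) - 1)) := by
  have hπ : (0:ℝ) < π := Real.pi_pos
  -- limit of log stirlingSeq
  have u1 : Tendsto (fun N : ℕ => Real.log (Stirling.stirlingSeq N)) atTop
      (𝓝 (Real.log (Real.sqrt π))) :=
    ((Real.continuousAt_log (by positivity)).tendsto).comp Stirling.tendsto_stirlingSeq_sqrt_pi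
  -- limit of (N+1) * log(1 + 1/N)
  have v1 : Tendsto (fun N : ℕ => (N:ℝ) * Real.log (1 + 1 / (N:ℝ))) atTop (𝓝 1) := by
    have := (Real.tendsto_mul_log_one_add_div_atTop 1).comp tendsto_natCast_atTop_atTop
    exact this
  have v2 : Tendsto (fun N : ℕ => Real.log (1 + 1 / (N:ℝ))) atTop (𝓝 0) := by
    have : Tendsto (fun N : ℕ => 1 + 1 / (N : ℝ)) atTop (𝓝 1) := by
      simpa using (tendsto_const_nhds (x := (1:ℝ))).add tendsto_one_div_atTop_nhds_zero_nat
    simpa [Function.comp_def] using (Real.continuousAt_log (by norm_num)).tendsto.comp this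
  have u2 : Tendsto (fun N : ℕ => ((N:ℝ) + 1) * Real.log (1 + 1 / (N:ℝ))) atTop (𝓝 1) := by
    have := v1.add v2
    rw [add_zero] at this
    refine this.congr fun N => ?_
    ring
  -- combined function
  have comb : Tendsto (fun N : ℕ => 2 * Real.log (Stirling.stirlingSeq N) + Real.log 2
      - ((N:ℝ) + 1) * Real.log (1 + 1 / (N:ℝ))) atTop
      (𝓝 (2 * Real.log (Real.sqrt π) + Real.log 2 - 1)) := by
    exact ((u1.const_mul 2).add_const (Real.log 2)).sub u2
  have hval : 2 * Real.log (Real.sqrt π) + Real.log 2 - 1 = Real.log (2 * π) - 1 := by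
    rw [Real.log_sqrt hπ.le, Real.log_mul (by norm_num) hπ.ne']
    ring
  rw [hval] at comb
  refine comb.congr' ?_
  filter_upwards [eventually_ge_atTop 1] with N hN
  have hN0 : (0:ℝ) < N := by exact_mod_cast hN
  rw [log_factorial N hN]
  have hlog2N : Real.log (2 * (N:ℝ)) = Real.log 2 + Real.log N :=
    Real.log_mul (by norm_num) hN0.ne'
  have hlograt : Real.log (1 + 1 / (N:ℝ)) = Real.log ((N:ℝ) + 1) - Real.log N := by
    rw [← Real.log_div (by positivity) hN0.ne']
    congr 1
    field_simp
  rw [hlog2N, hlograt]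
  ring

lemma hasSum_h : HasSum h (Real.log (2 * π) - 1) := by
  have HA' : Summable (fun p : ℕ × ℕ => a p.swap) := summable_a.prod_symm
  have Hh : HasSum h (∑' p : ℕ × ℕ, a p.swap) :=
    HA'.hasSum.prod_fiberwise (fun n => hasSum_column n)
  have Ht : Tendsto (fun N => ∑ n ∈ range N, h n) atTop (𝓝 (Real.log (2 * π) - 1)) := by
    rw [funext sum_h]
    exact tendsto_main
  have := tendsto_nhds_unique Hh.tendsto_sum_nat Ht
  rwa [this] at Hh

lemma real_result :
    ∑' k : ℕ, (∑' n : ℕ, (1 / ((n : ℝ) + 1)) ^ (2 * k + 2))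
        / (((k : ℝ) + 1) * (2 * (k : ℝ) + 3))
      = Real.log (2 * π) - 1 := by
  have hrow : ∀ k : ℕ, (∑' n : ℕ, (1 / ((n : ℝ) + 1)) ^ (2 * k + 2))
        / (((k : ℝ) + 1) * (2 * (k : ℝ) + 3)) = ∑' n : ℕ, a (k, n) := by
    intro k
    rw [← tsum_div_const]
    rfl
  rw [funext hrow]
  have h1 : ∑' (k : ℕ) (n : ℕ), a (k, n) = ∑' p : ℕ × ℕ, a p :=
    (Summable.tsum_prod' summable_a (fun k => (summable_a.prod_factor k))).symm
  rw [h1]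
  have h2 : ∑' p : ℕ × ℕ, a p = ∑' p : ℕ × ℕ, a p.swap :=
    ((Equiv.prodComm ℕ ℕ).tsum_eq a).symm
  rw [h2]
  have HA' : Summable (fun p : ℕ × ℕ => a p.swap) := summable_a.prod_symm
  have Hh : HasSum h (∑' p : ℕ × ℕ, a p.swap) :=
    HA'.hasSum.prod_fiberwise (fun n => hasSum_column n)
  exact (tendsto_nhds_unique Hh.tendsto_sum_nat
    (by rw [funext sum_h]; exact tendsto_main) : _)

end Stmt6Aux

theorem stmt6 :
    ∑' k : ℕ, riemannZeta (2 * ((k : ℂ) + 1)) / (((k : ℂ) + 1) * (2 * ((k : ℂ) + 1) + 1))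
      = -1 + Real.log (2 * π) := by
  have hterm : ∀ k : ℕ, riemannZeta (2 * ((k : ℂ) + 1)) / (((k : ℂ) + 1) * (2 * ((k : ℂ) + 1) + 1))
      = (((∑' n : ℕ, (1 / ((n : ℝ) + 1)) ^ (2 * k + 2))
          / (((k : ℝ) + 1) * (2 * (k : ℝ) + 3)) : ℝ) : ℂ) := by
    intro k
    have harg : (2 : ℂ) * ((k : ℂ) + 1) = ((2 * k + 2 : ℕ) : ℂ) := by push_cast; ring
    have hre : 1 < (2 * ((k : ℂ) + 1)).re := by
      rw [harg, Complex.natCast_re]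
      push_cast
      linarith [Nat.cast_nonneg (α := ℝ) k]
    rw [zeta_eq_tsum_one_div_nat_add_one_cpow hre]
    have hzeta : ∑' n : ℕ, 1 / ((n : ℂ) + 1) ^ (2 * ((k : ℂ) + 1))
        = (((∑' n : ℕ, (1 / ((n : ℝ) + 1)) ^ (2 * k + 2)) : ℝ) : ℂ) := by
      rw [Complex.ofReal_tsum]
      refine tsum_congr fun n => ?_
      rw [harg, Complex.cpow_natCast]
      push_cast
      rw [div_pow]
      norm_num
    rw [hzeta]
    rw [Complex.ofReal_div]
    congr 1
    push_cast
    ring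
  rw [funext hterm, ← Complex.ofReal_tsum, Stmt6Aux.real_result]
  push_cast
  ring
end

section
/- ∑_{k=1}^∞ ζ(2k)/(4^k k(2k+1)) = ln(π) − 1. -/
open Real Filter Topology

lemma odd_series {x : ℝ} (hx : |x| < 1) :
    HasSum (fun k : ℕ => x ^ (2*k+1) / (2*k+1)) ((Real.log (1+x) - Real.log (1-x)) / 2) := by
  have hA := Real.hasSum_pow_div_log_of_abs_lt_one hx
  have hB := Real.hasSum_pow_div_log_of_abs_lt_one (x := -x) (by rwa [abs_neg])
  rw [show (1 : ℝ) - -x = 1 + x by ring] at hB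
  have hC := (hA.sub hB).div_const 2
  have hinj : Function.Injective (fun k : ℕ => 2*k) := fun a b h => by simpa using h
  have key : HasSum ((fun n : ℕ => (x ^ (n+1) / (n+1) - (-x) ^ (n+1) / (n+1)) / 2) ∘ (fun k => 2*k))
      ((-Real.log (1-x) - -Real.log (1+x)) / 2) := by
    apply (Function.Injective.hasSum_iff hinj ?_).mpr hC
    · intro n hn
      have hodd : ∃ m, n = 2*m+1 := by
        rcases Nat.even_or_odd n with ⟨r, hr⟩ | ⟨r, hr⟩
        · exact absurd ⟨r, by simp only []; omega⟩ hn
        · exact ⟨r, by omega⟩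
      obtain ⟨m, rfl⟩ := hodd
      have : (-x) ^ (2*m+1+1) = x ^ (2*m+1+1) := by
        rw [Even.neg_pow ⟨m+1, by ring⟩]
      simp [this]
  have key2 : HasSum (fun k : ℕ => x ^ (2*k+1) / (2*k+1))
      ((Real.log (1+x) - Real.log (1-x)) / 2) := by
    convert key using 2 with k
    · have : (-x) ^ (2*k+1) = -(x ^ (2*k+1)) := by
        rw [Odd.neg_pow ⟨k, by ring⟩]
      simp only [Function.comp_apply]
      rw [this]
      push_cast
      ring
    · ring
  exact key2

lemma inner_hasSum {x : ℝ} (hx0 : 0 < x) (hx : x < 1) :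
    HasSum (fun k : ℕ => x ^ (2*k+2) / ((k+1) * (2*k+3)))
      (-Real.log (1 - x^2) - (Real.log (1+x) - Real.log (1-x)) / x + 2) := by
  have hxne : x ≠ 0 := ne_of_gt hx0
  have hxabs : |x| < 1 := by rw [abs_of_pos hx0]; exact hx
  have hx2 : |x^2| < 1 := by
    rw [abs_of_nonneg (sq_nonneg x)]; nlinarith
  have h1 := Real.hasSum_pow_div_log_of_abs_lt_one hx2
  have hD := odd_series hxabs
  have hE : HasSum (fun k : ℕ => x ^ (2*(k+1)+1) / (2*(k+1)+1))
      ((Real.log (1+x) - Real.log (1-x)) / 2 - x) := by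
    have h0 : HasSum (fun k : ℕ => x ^ (2*k+1) / (2*(k:ℝ)+1))
        (((Real.log (1+x) - Real.log (1-x)) / 2 - x) + ∑ i ∈ Finset.range 1,
          x ^ (2*i+1) / (2*(i:ℝ)+1)) := by
      have hsum0 : ∑ i ∈ Finset.range 1, x ^ (2*i+1) / (2*(i:ℝ)+1) = x := by simp
      rw [hsum0, sub_add_cancel]
      exact hD
    have := (hasSum_nat_add_iff (f := fun k : ℕ => x ^ (2*k+1) / (2*(k:ℝ)+1)) 1).mpr h0
    convert this using 2 with k
    · rfl
    · push_cast; ring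
  have hF := h1.sub (hE.mul_left (2/x))
  have heq : ∀ k : ℕ, x ^ (2*k+2) / (((k:ℝ)+1) * (2*(k:ℝ)+3)) =
      (x^2) ^ (k+1) / ((k:ℝ)+1) - (2/x) * (x ^ (2*(k+1)+1) / (2*((k:ℝ)+1)+1)) := by
    intro k
    have hp : (x^2) ^ (k+1) = x ^ (2*k+2) := by rw [← pow_mul]; ring_nf
    have hq : x ^ (2*(k+1)+1) = x * x ^ (2*k+2) := by rw [← pow_succ']; ring_nf
    rw [hp, hq]
    have h3 : (2*(k:ℝ)+3) ≠ 0 := by positivity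
    have h4 : ((k:ℝ)+1) ≠ 0 := by positivity
    field_simp
    ring
  have hval : -Real.log (1 - x^2) - (Real.log (1+x) - Real.log (1-x)) / x + 2 =
      -Real.log (1 - x^2) - (2/x) * ((Real.log (1+x) - Real.log (1-x)) / 2 - x) := by
    field_simp
    ring
  rw [hval]
  convert hF using 2 with k
  · rfl
  · exact heq k

lemma G_form {y : ℝ} (hy : 2 ≤ y) :
    -Real.log (1 - (1/y)^2) - (Real.log (1+1/y) - Real.log (1-1/y)) / (1/y) + 2
    = 2*Real.log y + (y-1)*Real.log (y-1) - (y+1)*Real.log (y+1) + 2 := by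
  have hy0 : (0:ℝ) < y := by linarith
  have h1 : y - 1 ≠ 0 := by intro h; nlinarith [h]
  have h1' : (0:ℝ) < y - 1 := by linarith
  have h2 : (0:ℝ) < y + 1 := by linarith
  have e1 : 1 - (1/y)^2 = (y-1)*(y+1)/(y*y) := by field_simp; ring
  have e2 : 1 + 1/y = (y+1)/y := by field_simp
  have e3 : 1 - 1/y = (y-1)/y := by field_simp
  rw [e1, e2, e3, Real.log_div (by positivity) (by positivity),
    Real.log_mul (by positivity) (by positivity),
    Real.log_mul (ne_of_gt hy0) (ne_of_gt hy0),
    Real.log_div (ne_of_gt h2) (ne_of_gt hy0),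
    Real.log_div h1 (ne_of_gt hy0)]
  have hyne : y ≠ 0 := ne_of_gt hy0
  field_simp
  ring

lemma log_fact (N : ℕ) :
    ∑ n ∈ Finset.range N, Real.log ((n:ℝ)+1) = Real.log (Nat.factorial N : ℝ) := by
  induction N with
  | zero => simp
  | succ m ih =>
    rw [Finset.sum_range_succ, ih, Nat.factorial_succ]
    push_cast
    rw [Real.log_mul (by positivity) (by positivity)]
    ring

lemma partial_sum (N : ℕ) :
    ∑ n ∈ Finset.range N, (2*Real.log (2*((n:ℝ)+1))
        + ((2*((n:ℝ)+1)-1)*Real.log (2*((n:ℝ)+1)-1)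
          - (2*((n:ℝ)+1)+1)*Real.log (2*((n:ℝ)+1)+1)) + 2)
    = 2*(N:ℝ)*Real.log 2 + 2*Real.log (Nat.factorial N : ℝ) + 2*N
      - (2*(N:ℝ)+1)*Real.log (2*(N:ℝ)+1) := by
  have tele := Finset.sum_range_sub' (f := fun m : ℕ => (2*(m:ℝ)+1)*Real.log (2*(m:ℝ)+1)) N
  have hlog2 : ∀ n : ℕ, Real.log (2*((n:ℝ)+1)) = Real.log 2 + Real.log ((n:ℝ)+1) := by
    intro n; rw [Real.log_mul (by norm_num) (by positivity)]
  simp only [Finset.sum_add_distrib, hlog2]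
  have tele' : ∑ n ∈ Finset.range N,
      ((2*((n:ℝ)+1)-1)*Real.log (2*((n:ℝ)+1)-1) - (2*((n:ℝ)+1)+1)*Real.log (2*((n:ℝ)+1)+1))
      = - ((2*(N:ℝ)+1)*Real.log (2*(N:ℝ)+1)) := by
    have : ∀ n ∈ Finset.range N,
        ((2*((n:ℝ)+1)-1)*Real.log (2*((n:ℝ)+1)-1) - (2*((n:ℝ)+1)+1)*Real.log (2*((n:ℝ)+1)+1))
        = (fun m : ℕ => (2*(m:ℝ)+1)*Real.log (2*(m:ℝ)+1)) n
          - (fun m : ℕ => (2*(m:ℝ)+1)*Real.log (2*(m:ℝ)+1)) (n+1) := by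
      intro n _; push_cast; ring_nf
    rw [Finset.sum_congr rfl this, tele]
    simp
  rw [tele']
  have : ∑ x ∈ Finset.range N, 2 * (Real.log 2 + Real.log ((x:ℝ)+1))
      = 2*(N:ℝ)*Real.log 2 + 2*Real.log (Nat.factorial N : ℝ) := by
    rw [← log_fact N, Finset.mul_sum]
    simp only [mul_add]
    rw [Finset.sum_add_distrib]
    simp [Finset.sum_const]
    ring
  rw [this]
  simp [Finset.sum_const]
  ring

lemma stirling_log {N : ℕ} (h : 1 ≤ N) :
    Real.log (Nat.factorial N : ℝ) = Real.log (Stirling.stirlingSeq N)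
      + (1/2)*Real.log (2*(N:ℝ)) + (N:ℝ)*Real.log N - N := by
  have hN : (0:ℝ) < N := by exact_mod_cast h
  have hfac : (0:ℝ) < (Nat.factorial N : ℝ) := by exact_mod_cast Nat.factorial_pos N
  have hD : (0:ℝ) < Real.sqrt (2*(N:ℝ)) * ((N:ℝ)/Real.exp 1)^N := by positivity
  have hst : Stirling.stirlingSeq N = (Nat.factorial N : ℝ) / (Real.sqrt (2*(N:ℝ)) * ((N:ℝ)/Real.exp 1)^N) := rfl
  have hfe : (Nat.factorial N : ℝ) = Stirling.stirlingSeq N * (Real.sqrt (2*(N:ℝ)) * ((N:ℝ)/Real.exp 1)^N) := by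
    rw [hst]; field_simp
  have hstpos : 0 < Stirling.stirlingSeq N := by
    obtain ⟨m, rfl⟩ := Nat.exists_eq_succ_of_ne_zero (by omega : N ≠ 0)
    exact Stirling.stirlingSeq'_pos m
  rw [hfe, Real.log_mul (ne_of_gt hstpos) (ne_of_gt hD),
    Real.log_mul (by positivity) (by positivity),
    Real.log_sqrt (by positivity), Real.log_pow, Real.log_div (ne_of_gt hN) (by positivity),
    Real.log_exp]
  ring

lemma SN_tendsto :
    Filter.Tendsto (fun N : ℕ => 2*(N:ℝ)*Real.log 2 + 2*Real.log (Nat.factorial N : ℝ) + 2*(N:ℝ)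
      - (2*(N:ℝ)+1)*Real.log (2*(N:ℝ)+1)) atTop (𝓝 (Real.log π - 1)) := by
  have h2N : Filter.Tendsto (fun N : ℕ => (2*(N:ℝ))) atTop atTop := by
    exact Filter.Tendsto.const_mul_atTop (by norm_num : (0:ℝ) < 2) (tendsto_natCast_atTop_atTop (R := ℝ))
  have L1 : Filter.Tendsto (fun N : ℕ => 2*Real.log (Stirling.stirlingSeq N)) atTop (𝓝 (Real.log π)) := by
    have := (Stirling.tendsto_stirlingSeq_sqrt_pi.log (Real.sqrt_pos.mpr Real.pi_pos).ne').const_mul 2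
    convert this using 2
    rw [Real.log_sqrt Real.pi_pos.le]; ring
  have L2 : Filter.Tendsto (fun N : ℕ => (2*(N:ℝ)+1)*Real.log (1+1/(2*(N:ℝ)))) atTop (𝓝 1) := by
    have A : Filter.Tendsto (fun N : ℕ => (2*(N:ℝ))*Real.log (1+1/(2*(N:ℝ)))) atTop (𝓝 1) := by
      have := (Real.tendsto_mul_log_one_add_div_atTop 1).comp h2N
      refine this.congr fun N => ?_
      simp only [Function.comp_apply]
    have B : Filter.Tendsto (fun N : ℕ => Real.log (1+1/(2*(N:ℝ)))) atTop (𝓝 0) := by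
      have h0 : Filter.Tendsto (fun N : ℕ => 1+1/(2*(N:ℝ))) atTop (𝓝 1) := by
        have := (tendsto_inv_atTop_zero.comp h2N).const_add (1:ℝ)
        simpa [one_div] using this
      have := h0.log one_ne_zero
      simpa using this
    have := A.add B
    convert this using 2 with N
    · ring
    · norm_num
  have key := L1.sub L2
  apply key.congr'
  filter_upwards [Filter.eventually_ge_atTop 1] with N hN
  have hN' : (1:ℝ) ≤ (N:ℝ) := by exact_mod_cast hN
  have hNpos : (0:ℝ) < N := by linarith
  rw [stirling_log hN]
  have hlog1 : Real.log (1+1/(2*(N:ℝ))) = Real.log (2*(N:ℝ)+1) - Real.log (2*(N:ℝ)) := by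
    rw [show (1:ℝ)+1/(2*(N:ℝ)) = (2*(N:ℝ)+1)/(2*(N:ℝ)) by field_simp]
    rw [Real.log_div (by positivity) (by positivity)]
  have hlog2N : Real.log (2*(N:ℝ)) = Real.log 2 + Real.log N := Real.log_mul (by norm_num) (ne_of_gt hNpos)
  rw [hlog1, hlog2N]
  ring

noncomputable def aa (k n : ℕ) : ℝ :=
  (1/(2*((n:ℝ)+1)))^(2*k+2) / (((k:ℝ)+1) * (2*(k:ℝ)+3))

lemma aa_nonneg (k n : ℕ) : 0 ≤ aa k n := by unfold aa; positivity

lemma aa_le (k n : ℕ) : aa k n ≤ (1/4:ℝ)^(k+1) * (1/((n:ℝ)+1))^2 := by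
  unfold aa
  have hd : (1:ℝ) ≤ ((k:ℝ)+1) * (2*(k:ℝ)+3) := by nlinarith [Nat.cast_nonneg (α := ℝ) k]
  have h1 : ((1:ℝ)/(2*((n:ℝ)+1)))^(2*k+2) ≤ (1/4:ℝ)^(k+1) * (1/((n:ℝ)+1))^2 := by
    have e : ((1:ℝ)/(2*((n:ℝ)+1)))^(2*k+2) = (1/4:ℝ)^(k+1) * (1/((n:ℝ)+1))^(2*k+2) := by
      rw [show (1:ℝ)/(2*((n:ℝ)+1)) = (1/2) * (1/((n:ℝ)+1)) by field_simp,
        mul_pow, show (2*k+2) = 2*(k+1) by ring, pow_mul]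
      norm_num
    rw [e]
    apply mul_le_mul_of_nonneg_left _ (by positivity)
    apply pow_le_pow_of_le_one (by positivity) _ (by omega)
    rw [div_le_one (by positivity)]; linarith [Nat.cast_nonneg (α := ℝ) n]
  calc (1/(2*((n:ℝ)+1)))^(2*k+2) / (((k:ℝ)+1) * (2*(k:ℝ)+3))
      ≤ (1/(2*((n:ℝ)+1)))^(2*k+2) / 1 := by
        apply div_le_div_of_nonneg_left (by positivity) (by norm_num) hd
    _ = (1/(2*((n:ℝ)+1)))^(2*k+2) := by ring
    _ ≤ _ := h1

lemma hZ2 : Summable (fun n : ℕ => (1/((n:ℝ)+1))^2) := by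
  have := (summable_nat_add_iff (f := fun n : ℕ => 1/(n:ℝ)^2) 1).mpr
    (summable_one_div_nat_pow.mpr one_lt_two)
  refine this.congr fun n => ?_
  push_cast
  rw [div_pow]
  norm_num

lemma aa_summable : Summable (Function.uncurry aa) := by
  refine (summable_prod_of_nonneg (f := Function.uncurry aa) (fun p => aa_nonneg p.1 p.2)).mpr ⟨?_, ?_⟩
  · intro k
    exact Summable.of_nonneg_of_le (fun n => aa_nonneg k n) (fun n => aa_le k n)
      (hZ2.mul_left _)
  · have hbound : Summable (fun k : ℕ => (1/4:ℝ)^(k+1) * ∑' n : ℕ, (1/((n:ℝ)+1))^2) := by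
      have hgeo : Summable (fun k : ℕ => (1/4:ℝ)^k * ((1/4:ℝ) * ∑' n : ℕ, (1/((n:ℝ)+1))^2)) :=
        (summable_geometric_of_lt_one (by norm_num) (by norm_num)).mul_right _
      refine hgeo.congr fun k => ?_
      rw [pow_succ]
      ring
    refine Summable.of_nonneg_of_le (fun k => tsum_nonneg (fun n => aa_nonneg k n))
      (fun k => ?_) hbound
    calc ∑' n, aa k n ≤ ∑' n : ℕ, (1/4:ℝ)^(k+1) * (1/((n:ℝ)+1))^2 :=
            Summable.tsum_le_tsum (fun n => aa_le k n)
              (Summable.of_nonneg_of_le (fun n => aa_nonneg k n) (fun n => aa_le k n)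
                (hZ2.mul_left _)) (hZ2.mul_left _)
        _ = (1/4:ℝ)^(k+1) * ∑' n : ℕ, (1/((n:ℝ)+1))^2 := tsum_mul_left

lemma inner_g (n : ℕ) :
    HasSum (fun k : ℕ => aa k n)
      (2*Real.log (2*((n:ℝ)+1)) + (2*((n:ℝ)+1)-1)*Real.log (2*((n:ℝ)+1)-1)
        - (2*((n:ℝ)+1)+1)*Real.log (2*((n:ℝ)+1)+1) + 2) := by
  have hy : (2:ℝ) ≤ 2*((n:ℝ)+1) := by nlinarith [Nat.cast_nonneg (α := ℝ) n]
  have hx0 : (0:ℝ) < 1/(2*((n:ℝ)+1)) := by positivity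
  have hx1 : 1/(2*((n:ℝ)+1)) < 1 := by
    rw [div_lt_one (by positivity)]; linarith
  have h := inner_hasSum hx0 hx1
  rw [G_form hy] at h
  exact h.congr_fun fun k => by unfold aa; rfl

lemma real_tsum :
    ∑' k : ℕ, (∑' n : ℕ, (1/((n:ℝ)+1))^(2*k+2)) / ((4:ℝ)^(k+1) * (((k:ℝ)+1) * (2*(k:ℝ)+3)))
      = Real.log π - 1 := by
  have hrow : ∀ k : ℕ, ∑' n : ℕ, aa k n
      = (∑' n : ℕ, (1/((n:ℝ)+1))^(2*k+2)) / ((4:ℝ)^(k+1) * (((k:ℝ)+1) * (2*(k:ℝ)+3))) := by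
    intro k
    have hpt : ∀ n : ℕ, aa k n
        = ((1/((n:ℝ)+1))^(2*k+2)) / ((4:ℝ)^(k+1) * (((k:ℝ)+1) * (2*(k:ℝ)+3))) := by
      intro n
      unfold aa
      rw [show (1:ℝ)/(2*((n:ℝ)+1)) = (1/2) * (1/((n:ℝ)+1)) by field_simp, mul_pow,
        show 2*k+2 = 2*(k+1) by ring, pow_mul]
      norm_num
      rw [show ((1:ℝ)/4)^(k+1) = ((4:ℝ)^(k+1))⁻¹ by rw [one_div, inv_pow]]
      rw [div_eq_div_iff (by positivity) (by positivity)]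
      field_simp
    rw [tsum_congr hpt, tsum_div_const]
  rw [← tsum_congr hrow]
  rw [← Summable.tsum_comm aa_summable]
  have hG : ∀ n : ℕ, ∑' k : ℕ, aa k n
      = 2*Real.log (2*((n:ℝ)+1)) + (2*((n:ℝ)+1)-1)*Real.log (2*((n:ℝ)+1)-1)
        - (2*((n:ℝ)+1)+1)*Real.log (2*((n:ℝ)+1)+1) + 2 := fun n => (inner_g n).tsum_eq
  rw [tsum_congr hG]
  have hsumG : Summable (fun n : ℕ =>
      2*Real.log (2*((n:ℝ)+1)) + (2*((n:ℝ)+1)-1)*Real.log (2*((n:ℝ)+1)-1)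
        - (2*((n:ℝ)+1)+1)*Real.log (2*((n:ℝ)+1)+1) + 2) :=
    (aa_summable.prod_symm.prod).congr hG
  apply HasSum.tsum_eq
  rw [hsumG.hasSum_iff_tendsto_nat]
  have hps : ∀ N : ℕ, ∑ n ∈ Finset.range N,
      (2*Real.log (2*((n:ℝ)+1)) + (2*((n:ℝ)+1)-1)*Real.log (2*((n:ℝ)+1)-1)
        - (2*((n:ℝ)+1)+1)*Real.log (2*((n:ℝ)+1)+1) + 2)
      = 2*(N:ℝ)*Real.log 2 + 2*Real.log (Nat.factorial N : ℝ) + 2*(N:ℝ)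
        - (2*(N:ℝ)+1)*Real.log (2*(N:ℝ)+1) := by
    intro N
    rw [← partial_sum N]
    exact Finset.sum_congr rfl fun n _ => by ring
  simp only [hps]
  exact SN_tendsto

open Real Complex

theorem stmt11 :
    ∑' k : ℕ, riemannZeta (2 * ((k : ℂ) + 1))
        / ((4 : ℂ) ^ (k + 1) * ((k : ℂ) + 1) * (2 * ((k : ℂ) + 1) + 1))
      = Real.log π - 1 := by
  have hterm : ∀ k : ℕ, riemannZeta (2 * ((k : ℂ) + 1))
      / ((4 : ℂ) ^ (k + 1) * ((k : ℂ) + 1) * (2 * ((k : ℂ) + 1) + 1))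
      = (((∑' n : ℕ, (1/((n:ℝ)+1))^(2*k+2)) / ((4:ℝ)^(k+1) * (((k:ℝ)+1) * (2*(k:ℝ)+3))) : ℝ) : ℂ) := by
    intro k
    have harg : (2 * ((k : ℂ) + 1)) = ((2*k+2 : ℕ) : ℂ) := by push_cast; ring
    have h1 : (1:ℝ) < ((2*k+2 : ℕ) : ℂ).re := by
      rw [Complex.natCast_re]
      exact_mod_cast Nat.lt_of_sub_eq_succ rfl
    have hz : riemannZeta (2 * ((k : ℂ) + 1)) = ((∑' n : ℕ, (1/((n:ℝ)+1))^(2*k+2) : ℝ) : ℂ) := by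
      rw [harg, zeta_eq_tsum_one_div_nat_add_one_cpow h1, Complex.ofReal_tsum]
      apply tsum_congr
      intro n
      rw [Complex.cpow_natCast]
      push_cast
      norm_num
    rw [hz]
    have hBd : ((4:ℂ)^(k+1) * ((k:ℂ)+1) * (2*((k:ℂ)+1)+1))
        = ((((4:ℝ)^(k+1) * (((k:ℝ)+1) * (2*(k:ℝ)+3))) : ℝ) : ℂ) := by push_cast; ring
    rw [hBd, ← Complex.ofReal_div]
  rw [tsum_congr hterm, ← Complex.ofReal_tsum, real_tsum]
  push_cast
  ring
end
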